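/- For every integer 1 ≤ k ≤ d and every w ∈ ℝ^d, (1/2)(‖w‖_k^sp)² = max{ ⟨u, w⟩ − (1/2)( ∑_{i=1}^k (|u|↓_i)² ) : u ∈ ℝ^d }, i.e. half the squared k-support norm is the Fenchel conjugate of half the squared ℓ2 norm of the k largest-magnitude entries. -/

import Mathlib

/-!
Write `ψ u = √(topSqSum k u)` for the ℓ2 norm of the `k` largest entries of `|u|`; an exchange
argument shows that `topSqSum k u` is the largest `∑ j ∈ S, u j ^ 2` over `#S ≤ k`. By
Cauchy–Schwarz on the support, `⟪u, v⟫ ≤ ψ u` for every `k`-sparse `v` in the unit ball, with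
equality for `v` proportional to `u` cut down to its `k` largest entries; so `ψ` is the support
function of the k-support ball and `⟪u, w⟫ ≤ ‖w‖ₖˢᵖ · ψ u`, which gives the upper bound
`⟪u, w⟫ - ψ(u)² / 2 ≤ (‖w‖ₖˢᵖ)² / 2`. The ball is a neighbourhood of `0`, so `w / ‖w‖ₖˢᵖ` lies on
its frontier, and the normal of a supporting hyperplane there, suitably scaled, attains the bound.
-/

/-- The nonincreasing rearrangement of the absolute values of `u`,
0-indexed: `absDown u i` is the `(i+1)`-th largest of `|u 0|, …, |u (d-1)|`. -/
noncomputable def absDown {d : ℕ} (u : Fin d → ℝ) (i : Fin d) : ℝ :=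
  |u (Tuple.sort (fun j => |u j|) i.rev)|

/-- 1-indexed access to the nonincreasing rearrangement: `zD u i = |u|↓_i` for `1 ≤ i ≤ d`. -/
noncomputable def zD {d : ℕ} (u : Fin d → ℝ) (i : ℕ) : ℝ :=
  if h : 1 ≤ i ∧ i ≤ d then absDown u ⟨i - 1, by omega⟩ else 0

/-- The unit ball of the k-support norm: the convex hull of
`S_k = {w : ‖w‖₀ ≤ k, ‖w‖₂ ≤ 1}`. -/
noncomputable def kSupBall (d k : ℕ) : Set (EuclideanSpace ℝ (Fin d)) :=
  convexHull ℝ {w | (Finset.univ.filter fun i => w i ≠ 0).card ≤ k ∧ ‖w‖ ≤ 1}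

/-- The k-support norm, defined as the gauge of `kSupBall d k`. -/
noncomputable def kSupNorm (d k : ℕ) (w : EuclideanSpace ℝ (Fin d)) : ℝ :=
  gauge (kSupBall d k) w

/-- The elastic-net norm `max{‖w‖₂, ‖w‖₁ / √k}`. -/
noncomputable def elNet (d k : ℕ) (w : EuclideanSpace ℝ (Fin d)) : ℝ :=
  max ‖w‖ ((∑ i, |w i|) / Real.sqrt k)

open Finset
open scoped RealInnerProductSpace Pointwise Topology

section Exchange

variable {ι M : Type*} [AddCommMonoid M] [LinearOrder M] [IsOrderedCancelAddMonoid M]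
  {s t : Finset ι} {g : ι → M}

theorem Finset.sum_le_sum_of_card_le_of_forall_le (hcard : #s ≤ #t) (ht : ∀ j ∈ t, 0 ≤ g j)
    (hle : ∀ i ∈ s, ∀ j ∈ t, g i ≤ g j) : ∑ i ∈ s, g i ≤ ∑ j ∈ t, g j := by
  rcases t.eq_empty_or_nonempty with rfl | hne
  · simp [card_eq_zero.mp (Nat.le_zero.mp hcard)]
  calc ∑ i ∈ s, g i ≤ #s • t.inf' hne g :=
        sum_le_card_nsmul _ _ _ fun i hi => le_inf' hne _ (hle i hi)
    _ ≤ #t • t.inf' hne g := nsmul_le_nsmul_left (le_inf' hne _ ht) hcard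
    _ ≤ ∑ j ∈ t, g j := card_nsmul_le_sum _ _ _ fun j hj => inf'_le _ hj

theorem Finset.sum_le_sum_of_card_le_of_forall_sdiff_le [DecidableEq ι] (hcard : #s ≤ #t)
    (ht : ∀ j ∈ t, 0 ≤ g j) (hle : ∀ i ∈ s \ t, ∀ j ∈ t \ s, g i ≤ g j) :
    ∑ i ∈ s, g i ≤ ∑ j ∈ t, g j :=
  sum_sdiff_le_sum_sdiff.mp <| sum_le_sum_of_card_le_of_forall_le
    (card_sdiff_le_card_sdiff_iff.mpr hcard) (fun j hj => ht j (mem_sdiff.mp hj).1) hle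

end Exchange

section TopSqSum

variable {d k : ℕ}

noncomputable def topSqSum (k : ℕ) (u : Fin d → ℝ) : ℝ := ∑ i ∈ Icc 1 k, zD u i ^ 2

/-- The positions of the `k` largest entries of `|u|` (all of them if `d ≤ k`), read off the
sorting permutation exactly as `absDown` reads them. -/
noncomputable def topSet (k : ℕ) (u : Fin d → ℝ) : Finset (Fin d) :=
  ({m | (m : ℕ) < k} : Finset (Fin d)).map
    (Fin.revPerm.trans (Tuple.sort fun j => |u j|)).toEmbedding

lemma zD_val_add_one (u : Fin d → ℝ) (m : Fin d) : zD u (m + 1) = absDown u m := by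
  simp [zD]

lemma zD_eq_zero_of_lt {u : Fin d → ℝ} {i : ℕ} (hi : d < i) : zD u i = 0 :=
  dif_neg (by omega)

lemma topSqSum_eq_sum_topSet (k : ℕ) (u : Fin d → ℝ) :
    topSqSum k u = ∑ j ∈ topSet k u, u j ^ 2 := by
  let shift : Fin d ↪ ℕ := Fin.valEmbedding.trans (addRightEmbedding 1)
  have hsub : ({m | (m : ℕ) < k} : Finset (Fin d)).map shift ⊆ Icc 1 k := by
    simp only [subset_iff, mem_map, mem_filter, mem_univ, true_and, forall_exists_index, and_imp]
    rintro _ m hm rfl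
    exact mem_Icc.mpr ⟨Nat.le_add_left 1 m, hm⟩
  rw [topSqSum, topSet, sum_map, ← sum_subset hsub, sum_map]
  · refine sum_congr rfl fun m _ => ?_
    simp [shift, zD_val_add_one, absDown]
  · intro i hi hnot
    rw [mem_Icc] at hi
    rw [zD_eq_zero_of_lt, sq, zero_mul]
    by_contra! hid
    exact hnot <| mem_map.mpr ⟨⟨i - 1, by omega⟩,
      mem_filter.mpr ⟨mem_univ _, show i - 1 < k by omega⟩, show i - 1 + 1 = i by omega⟩

lemma card_topSet (k : ℕ) (u : Fin d → ℝ) : #(topSet k u) = min d k := by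
  simp [topSet, Fin.card_filter_val_lt]

lemma abs_le_abs_of_notMem_topSet {u : Fin d → ℝ} {i j : Fin d} (hi : i ∉ topSet k u)
    (hj : j ∈ topSet k u) : |u i| ≤ |u j| := by
  simp only [topSet, mem_map_equiv, mem_filter, mem_univ, true_and, Equiv.symm_trans_apply,
    Fin.revPerm_symm, Fin.revPerm_apply, Fin.val_rev, not_lt] at hi hj
  have hle : (Tuple.sort fun j => |u j|).symm i ≤ (Tuple.sort fun j => |u j|).symm j := by
    rw [Fin.le_def]; omega
  simpa using Tuple.monotone_sort (fun j => |u j|) hle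

lemma sum_sq_le_topSqSum {u : Fin d → ℝ} {S : Finset (Fin d)} (hS : #S ≤ k) :
    ∑ j ∈ S, u j ^ 2 ≤ topSqSum k u := by
  rw [topSqSum_eq_sum_topSet]
  refine sum_le_sum_of_card_le_of_forall_sdiff_le ?_ (fun j _ => sq_nonneg _) fun i hi j hj => ?_
  · rw [card_topSet]
    exact le_min (card_le_univ S |>.trans_eq (Fintype.card_fin d)) hS
  · exact sq_le_sq.mpr <| abs_le_abs_of_notMem_topSet (mem_sdiff.mp hi).2 (mem_sdiff.mp hj).1

lemma exists_topSqSum_eq (k : ℕ) (u : Fin d → ℝ) :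
    ∃ S : Finset (Fin d), #S ≤ k ∧ topSqSum k u = ∑ j ∈ S, u j ^ 2 :=
  ⟨topSet k u, (card_topSet k u).trans_le (min_le_right d k), topSqSum_eq_sum_topSet k u⟩

lemma topSqSum_nonneg (k : ℕ) (u : Fin d → ℝ) : 0 ≤ topSqSum k u :=
  sum_nonneg fun _ _ => sq_nonneg _

lemma topSqSum_smul (c : ℝ) (u : Fin d → ℝ) : topSqSum k (c • u) = c ^ 2 * topSqSum k u := by
  have hsum (S : Finset (Fin d)) : ∑ j ∈ S, (c • u) j ^ 2 = c ^ 2 * ∑ j ∈ S, u j ^ 2 := by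
    simp [mul_sum, mul_pow]
  obtain ⟨S, hS, hcu⟩ := exists_topSqSum_eq k (c • u)
  obtain ⟨S', hS', hu⟩ := exists_topSqSum_eq k u
  apply le_antisymm
  · rw [hcu, hsum]
    exact mul_le_mul_of_nonneg_left (sum_sq_le_topSqSum hS) (sq_nonneg c)
  · rw [hu, ← hsum]
    exact sum_sq_le_topSqSum hS'

lemma topSqSum_pos (hk : 1 ≤ k) {u : Fin d → ℝ} (hu : u ≠ 0) : 0 < topSqSum k u := by
  obtain ⟨j, hj⟩ := Function.ne_iff.mp hu
  calc 0 < u j ^ 2 := pow_two_pos_of_ne_zero hj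
    _ = ∑ i ∈ {j}, u i ^ 2 := by simp
    _ ≤ topSqSum k u := sum_sq_le_topSqSum (by simpa using hk)

end TopSqSum

section Duality

variable {E : Type*} [NormedAddCommGroup E] [InnerProductSpace ℝ E] {C : Set E}

lemma inner_le_gauge_mul (hC : Absorbent ℝ C) {u : E} {σ : ℝ} (hσ : 0 ≤ σ)
    (hu : ∀ x ∈ C, ⟪u, x⟫ ≤ σ) (w : E) : ⟪u, w⟫ ≤ gauge C w * σ := by
  have hr : ∀ r ∈ {r : ℝ | 0 < r ∧ w ∈ r • C}, ⟪u, w⟫ ≤ r * σ := by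
    rintro r ⟨hr, x, hx, rfl⟩
    rw [inner_smul_right]
    exact mul_le_mul_of_nonneg_left (hu x hx) hr.le
  rcases hσ.eq_or_lt with rfl | hσ
  · obtain ⟨r, hrw⟩ := hC.gauge_set_nonempty (x := w)
    simpa using hr r hrw
  · rw [← div_le_iff₀ hσ]
    exact le_csInf hC.gauge_set_nonempty fun r hrw => (div_le_iff₀ hσ).mpr (hr r hrw)

lemma exists_inner_le_inner_of_notMem_interior [CompleteSpace E] (hC : Convex ℝ C)
    (hint : (interior C).Nonempty) {x : E} (hx : x ∉ interior C) :
    ∃ u ≠ 0, ∀ y ∈ C, ⟪u, y⟫ ≤ ⟪u, x⟫ := by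
  obtain ⟨f, hf0, hf⟩ := geometric_hahn_banach_of_nonempty_interior_point hC hx hint
  exact ⟨(InnerProductSpace.toDual ℝ E).symm f, by simpa using hf0,
    fun y hy => by simpa [InnerProductSpace.toDual_symm_apply] using hf y hy⟩

end Duality

section KSupport

variable {d k : ℕ}

lemma real_inner_eq_sum_mul (u v : EuclideanSpace ℝ (Fin d)) : ⟪u, v⟫ = ∑ i, u i * v i := by
  simp [PiLp.inner_apply, mul_comm]

lemma inner_le_sqrt_topSqSum_of_card_support_le (u : EuclideanSpace ℝ (Fin d))
    {v : EuclideanSpace ℝ (Fin d)} (hv : #{i | v i ≠ 0} ≤ k) (hv1 : ‖v‖ ≤ 1) :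
    ⟪u, v⟫ ≤ √(topSqSum k u) := by
  have hsupp : ⟪u, v⟫ = ∑ i ∈ {i | v i ≠ 0}, u i * v i := by
    rw [real_inner_eq_sum_mul, sum_filter_of_ne fun i _ h => right_ne_zero_of_mul h]
  have hv2 : ∑ i ∈ {i | v i ≠ 0}, v i ^ 2 ≤ 1 := by
    calc _ ≤ ∑ i, v i ^ 2 := sum_le_sum_of_subset_of_nonneg (subset_univ _) fun _ _ _ => sq_nonneg _
      _ = ‖v‖ ^ 2 := by simp [EuclideanSpace.norm_sq_eq]
      _ ≤ 1 := pow_le_one₀ (norm_nonneg v) hv1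
  calc ⟪u, v⟫ ≤ √(∑ i ∈ {i | v i ≠ 0}, u i ^ 2) * √(∑ i ∈ {i | v i ≠ 0}, v i ^ 2) :=
        hsupp ▸ Real.sum_mul_le_sqrt_mul_sqrt _ _ _
    _ ≤ √(topSqSum k u) * 1 := by
        gcongr
        · exact sum_sq_le_topSqSum hv
        · exact Real.sqrt_le_one.mpr hv2
    _ = √(topSqSum k u) := mul_one _

lemma exists_inner_eq_sqrt_topSqSum (k : ℕ) (u : EuclideanSpace ℝ (Fin d)) :
    ∃ v : EuclideanSpace ℝ (Fin d), (#{i | v i ≠ 0} ≤ k ∧ ‖v‖ ≤ 1) ∧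
      ⟪u, v⟫ = √(topSqSum k u) := by
  obtain ⟨S, hS, hT⟩ := exists_topSqSum_eq k u
  set t := √(topSqSum k u)
  let v : EuclideanSpace ℝ (Fin d) := WithLp.toLp 2 fun j => if j ∈ S then u j / t else 0
  have hv (j : Fin d) : v j = if j ∈ S then u j / t else 0 := rfl
  refine ⟨v, ⟨(card_le_card fun j hj => ?_).trans hS, ?_⟩, ?_⟩
  · by_contra hjS
    simp [hv, hjS] at hj
  · have hsq : ‖v‖ ^ 2 = topSqSum k u / t ^ 2 := by
      simp [EuclideanSpace.norm_sq_eq, hv, apply_ite, div_pow, ← sum_div, hT]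
    rw [← sq_le_one_iff₀ (norm_nonneg v), hsq, Real.sq_sqrt (topSqSum_nonneg k u)]
    exact div_self_le_one _
  · calc ⟪u, v⟫ = (∑ j ∈ S, u j ^ 2) / t := by
          simp [real_inner_eq_sum_mul, hv, mul_ite, sum_div, mul_div_assoc', sq]
      _ = t := by rw [← hT, Real.div_sqrt]

lemma inner_le_sqrt_topSqSum_of_mem_kSupBall (u : EuclideanSpace ℝ (Fin d))
    {x : EuclideanSpace ℝ (Fin d)} (hx : x ∈ kSupBall d k) : ⟪u, x⟫ ≤ √(topSqSum k u) :=
  convexHull_min (fun _ hv => inner_le_sqrt_topSqSum_of_card_support_le u hv.1 hv.2)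
    (convex_halfSpace_le (innerₛₗ ℝ u).isLinear _) hx

lemma convex_kSupBall : Convex ℝ (kSupBall d k) := convex_convexHull ℝ _

lemma kSupBall_mem_nhds_zero (hk : 1 ≤ k) : kSupBall d k ∈ 𝓝 0 := by
  rcases Nat.eq_zero_or_pos d with rfl | hd
  · exact Filter.univ_mem' fun x =>
      Subsingleton.elim 0 x ▸ subset_convexHull ℝ _ ⟨by simp, by simp⟩
  refine Metric.mem_nhds_iff.mpr ⟨1 / d, by positivity, fun x hx => ?_⟩
  have hdx : (d : ℝ) * ‖x‖ < 1 := by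
    rw [mem_ball_zero_iff, lt_div_iff₀ (by positivity)] at hx
    linarith
  have hsum : ∑ i, (1 / d : ℝ) • ((d * x i) • EuclideanSpace.single i (1 : ℝ)) = x := by
    have := (EuclideanSpace.basisFun (Fin d) ℝ).sum_repr x
    simp only [EuclideanSpace.basisFun_apply, EuclideanSpace.basisFun_repr] at this
    simpa [smul_smul, ← mul_assoc, hd.ne'] using this
  rw [← hsum]
  refine convex_kSupBall.sum_mem (fun _ _ => by positivity) (by simp [hd.ne'])
    fun i _ => subset_convexHull ℝ _ ⟨(card_le_card (t := {i}) fun j hj => ?_).trans (by simpa), ?_⟩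
  · by_contra hji
    simp_all
  · rw [norm_smul, PiLp.norm_single, norm_one, mul_one, norm_mul, Real.norm_natCast]
    exact (mul_le_mul_of_nonneg_left (PiLp.norm_apply_le x i) (by positivity)).trans hdx.le

lemma inner_le_kSupNorm_mul (hk : 1 ≤ k) (u w : EuclideanSpace ℝ (Fin d)) :
    ⟪u, w⟫ ≤ kSupNorm d k w * √(topSqSum k u) :=
  inner_le_gauge_mul (absorbent_nhds_zero (kSupBall_mem_nhds_zero hk)) (Real.sqrt_nonneg _)
    (fun _ hx => inner_le_sqrt_topSqSum_of_mem_kSupBall u hx) w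

/-- The dual vector is `(g / ψ u) • u` for a normal `u` of a supporting hyperplane of the ball at
`w / g`, where `g` is the k-support norm of `w` and `ψ u = √(topSqSum k u)` is its dual norm. -/
lemma exists_sq_kSupNorm_le_inner (hk : 1 ≤ k) (w : EuclideanSpace ℝ (Fin d)) :
    ∃ u : EuclideanSpace ℝ (Fin d),
      topSqSum k u ≤ kSupNorm d k w ^ 2 ∧ kSupNorm d k w ^ 2 ≤ ⟪u, w⟫ := by
  rw [kSupNorm]
  set g := gauge (kSupBall d k) w
  rcases (show 0 ≤ g from gauge_nonneg w).eq_or_lt with hg | hg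
  · refine ⟨0, ?_, by simp [← hg]⟩
    simpa [← hg] using (topSqSum_smul (k := k) 0 (0 : Fin d → ℝ)).le
  have hball := kSupBall_mem_nhds_zero (d := d) hk
  have hx : g⁻¹ • w ∉ interior (kSupBall d k) := by
    rw [← gauge_lt_one_iff_mem_interior convex_kSupBall hball,
      gauge_smul_of_nonneg (inv_nonneg.mpr hg.le), smul_eq_mul]
    exact (inv_mul_cancel₀ hg.ne').not_lt
  obtain ⟨u, hu0, hu⟩ := exists_inner_le_inner_of_notMem_interior convex_kSupBall
    ⟨0, mem_interior_iff_mem_nhds.mpr hball⟩ hx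
  obtain ⟨v, hv, huv⟩ := exists_inner_eq_sqrt_topSqSum k u
  set ψ := √(topSqSum k u)
  have hψ : g * ψ ≤ ⟪u, w⟫ := by
    rw [← le_inv_mul_iff₀ hg]
    simpa [huv, inner_smul_right] using hu v (subset_convexHull ℝ _ hv)
  have hψ0 : 0 < ψ := Real.sqrt_pos.mpr (topSqSum_pos hk (by simpa using hu0))
  refine ⟨(g / ψ) • u, le_of_eq ?_, ?_⟩
  · rw [WithLp.ofLp_smul, topSqSum_smul, ← Real.sq_sqrt (topSqSum_nonneg k u), ← mul_pow,
      div_mul_cancel₀ _ hψ0.ne']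
  · rw [inner_smul_left, RCLike.conj_to_real]
    calc g ^ 2 = g / ψ * (g * ψ) := by field_simp
      _ ≤ g / ψ * ⟪u, w⟫ := by gcongr

lemma inner_sub_half_topSqSum_le (hk : 1 ≤ k) (u w : EuclideanSpace ℝ (Fin d)) :
    ⟪u, w⟫ - 1 / 2 * topSqSum k u ≤ 1 / 2 * kSupNorm d k w ^ 2 := by
  have hT := Real.sq_sqrt (topSqSum_nonneg k u)
  nlinarith [inner_le_kSupNorm_mul hk u w, sq_nonneg (kSupNorm d k w - √(topSqSum k u))]

end KSupport

theorem statement16_general (d k : ℕ) (hk1 : 1 ≤ k) (w : EuclideanSpace ℝ (Fin d)) :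
    IsGreatest {x : ℝ | ∃ u : EuclideanSpace ℝ (Fin d),
        x = (∑ i, u i * w i) - (1 / 2) * ∑ i ∈ Finset.Icc 1 k, zD u i ^ 2}
      ((1 / 2) * kSupNorm d k w ^ 2) := by
  change IsGreatest {x | ∃ u : EuclideanSpace ℝ (Fin d),
    x = ∑ i, u i * w i - 1 / 2 * topSqSum k u} _
  simp_rw [← real_inner_eq_sum_mul]
  obtain ⟨u, hTu, hu⟩ := exists_sq_kSupNorm_le_inner hk1 w
  exact ⟨⟨u, le_antisymm (by linarith) (inner_sub_half_topSqSum_le hk1 u w)⟩,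
    fun _ ⟨u, hx⟩ => hx ▸ inner_sub_half_topSqSum_le hk1 u w⟩

/-- half the squared k-support norm is the Fenchel conjugate of
half the squared ℓ2 norm of the `k` largest-magnitude entries:
`½(‖w‖ₖˢᵖ)² = max{⟨u, w⟩ − ½ ∑_{i=1}^k (|u|↓ᵢ)² : u ∈ ℝᵈ}`. -/
theorem statement16 (d k : ℕ) (hk1 : 1 ≤ k) (hkd : k ≤ d) (w : EuclideanSpace ℝ (Fin d)) :
    IsGreatest {x : ℝ | ∃ u : EuclideanSpace ℝ (Fin d),
        x = (∑ i, u i * w i) - (1 / 2) * ∑ i ∈ Finset.Icc 1 k, zD u i ^ 2}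
      ((1 / 2) * kSupNorm d k w ^ 2) :=
  statement16_general d k hk1 w
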